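/- Let ω, μ ∈ ℝ with ω ≠ 0, μ ≠ 0 and sin(ωμ) ≠ 0, and let x : ℝ → ℝ. Define the operators (Δx)(t) := (x(t + μ) - x(t))/μ and (D_ω x)(t) := ω·(x(t + μ) - x(t)·cos(ωμ))/sin(ωμ). Then for every t ∈ ℝ: (Δ(Δx))(t) + ω²·(sinc(ωμ/2))²·x(t + μ) = (sinc(ωμ/2))²·(cos(ωμ/2))²·((D_ω(D_ω x))(t) + ω²·x(t)). In particular, since sin(ωμ) ≠ 0 forces sinc(ωμ/2) ≠ 0 and cos(ωμ/2) ≠ 0, the function x satisfies (Δ(Δx))(t) + ω²·(sinc(ωμ/2))²·x(t + μ) = 0 for all t if and only if (D_ω(D_ω x))(t) + ω²·x(t) = 0 for all t. -/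

import Mathlib

/-- sinc(x) = sin(x)/x for x ≠ 0, sinc(0) = 1. -/
noncomputable def sinc (x : ℝ) : ℝ := if x = 0 then 1 else Real.sin x / x

/-- The delta derivative (forward difference quotient) with graininess μ. -/
noncomputable def deltaD (μ : ℝ) (x : ℝ → ℝ) : ℝ → ℝ := fun t => (x (t + μ) - x t) / μ

/-- The modified delta derivative x^{Δ''_ω} associated with the exact
discretization of the harmonic oscillator. -/
noncomputable def deltaMod (ω μ : ℝ) (x : ℝ → ℝ) : ℝ → ℝ :=
  fun t => ω * (x (t + μ) - x t * Real.cos (ω * μ)) / Real.sin (ω * μ)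

/-!
Write `c = cos (ωμ)`, `s = sin (ωμ)` and `P(t) = x(t + 2μ) - 2c·x(t + μ) + x(t)`.
Expanding the difference quotients, `D_ω(D_ω x) + ω²x = (ω/s)²·P` (this uses `c² + s² = 1`),
while `a²·sinc²(a/2) = 4 sin²(a/2) = 2(1 - cos a)` turns `Δ(Δx) + ω²sinc²(ωμ/2)·x∘σ` into `P/μ²`.
The two are proportional because `(ωμ)²·sinc²(ωμ/2)·cos²(ωμ/2) = sin²(ωμ)` by the double-angle
formula, and the factor of proportionality is nonzero as soon as `sin (ωμ) ≠ 0`.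
-/

theorem mul_sinc (a : ℝ) : a * sinc a = Real.sin a := by
  by_cases ha : a = 0
  · simp [ha]
  · rw [sinc, if_neg ha, mul_div_cancel₀ _ ha]

theorem sq_mul_sinc_half_sq (a : ℝ) : a ^ 2 * sinc (a / 2) ^ 2 = 2 * (1 - Real.cos a) := by
  have h := mul_sinc (a / 2)
  have hcos : Real.cos a = 2 * Real.cos (a / 2) ^ 2 - 1 := by
    rw [← Real.cos_two_mul, mul_div_cancel₀ _ two_ne_zero]
  rw [hcos]
  linear_combination (a / 2 * sinc (a / 2) + Real.sin (a / 2)) * 4 * h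
    + 4 * Real.sin_sq_add_cos_sq (a / 2)

theorem sq_mul_sinc_half_sq_mul_cos_half_sq (a : ℝ) :
    a ^ 2 * (sinc (a / 2) ^ 2 * Real.cos (a / 2) ^ 2) = Real.sin a ^ 2 := by
  have h := mul_sinc (a / 2)
  have hsin : Real.sin a = 2 * Real.sin (a / 2) * Real.cos (a / 2) := by
    rw [← Real.sin_two_mul, mul_div_cancel₀ _ two_ne_zero]
  rw [hsin]
  linear_combination (a / 2 * sinc (a / 2) + Real.sin (a / 2)) * 4 * Real.cos (a / 2) ^ 2 * h

theorem deltaD_deltaD_add_sinc_sq {μ : ℝ} (hμ : μ ≠ 0) (ω : ℝ) (x : ℝ → ℝ) (t : ℝ) :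
    deltaD μ (deltaD μ x) t + ω ^ 2 * sinc (ω * μ / 2) ^ 2 * x (t + μ)
      = (x (t + μ + μ) - 2 * Real.cos (ω * μ) * x (t + μ) + x t) / μ ^ 2 := by
  have h : ω ^ 2 * sinc (ω * μ / 2) ^ 2 = 2 * (1 - Real.cos (ω * μ)) / μ ^ 2 := by
    rw [eq_div_iff (pow_ne_zero 2 hμ)]
    linear_combination sq_mul_sinc_half_sq (ω * μ)
  rw [h]
  generalize Real.cos (ω * μ) = c
  simp only [deltaD]
  field_simp
  ring

theorem deltaMod_deltaMod_add_sq {ω μ : ℝ} (hs : Real.sin (ω * μ) ≠ 0) (x : ℝ → ℝ) (t : ℝ) :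
    deltaMod ω μ (deltaMod ω μ x) t + ω ^ 2 * x t
      = (ω / Real.sin (ω * μ)) ^ 2 * (x (t + μ + μ) - 2 * Real.cos (ω * μ) * x (t + μ) + x t) := by
  simp only [deltaMod]
  field_simp
  linear_combination ω ^ 2 * x t * Real.sin_sq_add_cos_sq (ω * μ)

theorem stmt19_general (ω μ : ℝ) (hμ : μ ≠ 0) (hs : Real.sin (ω * μ) ≠ 0)
    (x : ℝ → ℝ) :
    (∀ t : ℝ,
      deltaD μ (deltaD μ x) t + ω ^ 2 * (sinc (ω * μ / 2)) ^ 2 * x (t + μ)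
        = (sinc (ω * μ / 2)) ^ 2 * (Real.cos (ω * μ / 2)) ^ 2
          * (deltaMod ω μ (deltaMod ω μ x) t + ω ^ 2 * x t)) ∧
    ((∀ t : ℝ, deltaD μ (deltaD μ x) t + ω ^ 2 * (sinc (ω * μ / 2)) ^ 2 * x (t + μ) = 0) ↔
     (∀ t : ℝ, deltaMod ω μ (deltaMod ω μ x) t + ω ^ 2 * x t = 0)) := by
  have hfactor := sq_mul_sinc_half_sq_mul_cos_half_sq (ω * μ)
  have hfactor_ne : sinc (ω * μ / 2) ^ 2 * Real.cos (ω * μ / 2) ^ 2 ≠ 0 := by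
    intro h
    rw [h, mul_zero] at hfactor
    exact hs (pow_eq_zero_iff two_ne_zero |>.mp hfactor.symm)
  have key : ∀ t : ℝ,
      deltaD μ (deltaD μ x) t + ω ^ 2 * sinc (ω * μ / 2) ^ 2 * x (t + μ)
        = sinc (ω * μ / 2) ^ 2 * Real.cos (ω * μ / 2) ^ 2
          * (deltaMod ω μ (deltaMod ω μ x) t + ω ^ 2 * x t) := by
    intro t
    rw [deltaD_deltaD_add_sinc_sq hμ, deltaMod_deltaMod_add_sq hs]
    generalize sinc (ω * μ / 2) ^ 2 * Real.cos (ω * μ / 2) ^ 2 = k at hfactor ⊢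
    generalize Real.sin (ω * μ) = s at hs hfactor ⊢
    generalize Real.cos (ω * μ) = c
    field_simp
    linear_combination (x (t + μ + μ) - 2 * c * x (t + μ) + x t) * hfactor.symm
  refine ⟨key, forall_congr' fun t => ?_⟩
  rw [key t, mul_eq_zero_iff_left hfactor_ne]

/-- The identity
Δ(Δx) + ω²·sinc²(ωμ/2)·x∘σ = sinc²(ωμ/2)·cos²(ωμ/2)·(D_ω(D_ω x) + ω²x),
and the consequent equivalence of the two second-order dynamic equations. -/
theorem stmt19 (ω μ : ℝ) (hω : ω ≠ 0) (hμ : μ ≠ 0) (hs : Real.sin (ω * μ) ≠ 0)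
    (x : ℝ → ℝ) :
    (∀ t : ℝ,
      deltaD μ (deltaD μ x) t + ω ^ 2 * (sinc (ω * μ / 2)) ^ 2 * x (t + μ)
        = (sinc (ω * μ / 2)) ^ 2 * (Real.cos (ω * μ / 2)) ^ 2
          * (deltaMod ω μ (deltaMod ω μ x) t + ω ^ 2 * x t)) ∧
    ((∀ t : ℝ, deltaD μ (deltaD μ x) t + ω ^ 2 * (sinc (ω * μ / 2)) ^ 2 * x (t + μ) = 0) ↔
     (∀ t : ℝ, deltaMod ω μ (deltaMod ω μ x) t + ω ^ 2 * x t = 0)) :=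
  stmt19_general ω μ hμ hs x
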